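/- Let m : ℕ and let V ⊆ (Fin m → ZMod 2) be a doubly even code spanned by linearly independent vectors v₁, v₂, v₃, v₄ such that: |v_i| ≡ 0 (mod 8) for i = 1,2,3 and |v₄| ≡ 4 (mod 8); |supp v₁ ∩ supp v₂| ≡ 2 (mod 4), |supp v₁ ∩ supp v₃| ≡ 2 (mod 4), |supp v₁ ∩ supp v₄| ≡ 2 (mod 4), |supp v₂ ∩ supp v₃| ≡ 0 (mod 4), |supp v₂ ∩ supp v₄| ≡ 0 (mod 4), |supp v₃ ∩ supp v₄| ≡ 0 (mod 4); |supp v₁ ∩ supp v₂ ∩ supp v₃| is odd and |supp v_i ∩ supp v_j ∩ supp v₄| is even for 1 ≤ i < j ≤ 3; and every coordinate k ∈ Fin m lies in the support of some element of V. Then m ≥ 19, and if m = 19 then some permutation of the 19 coordinates maps V onto the code spanned by the indicator vectors of {1,...,8}, {1,2,9,10,11,12,13,14}, {1,3,9,10,11,15,16,17} and {4,5,18,19}. -/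

import Mathlib

/-- The support of a vector in `F₂^m`, as a finset of coordinates. -/
def supp {m : ℕ} (v : Fin m → ZMod 2) : Finset (Fin m) :=
  Finset.univ.filter fun k => v k ≠ 0

/-- The indicator vector in `F₂^m` of a set of (1-based) coordinate labels. -/
def indVec {m : ℕ} (S : Finset ℕ) : Fin m → ZMod 2 :=
  fun k => if (k : ℕ) + 1 ∈ S then 1 else 0

/-- The linear automorphism of `F₂^m` permuting coordinates by `π`. -/
def permMap {m : ℕ} (π : Equiv.Perm (Fin m)) :
    (Fin m → ZMod 2) →ₗ[ZMod 2] (Fin m → ZMod 2) where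
  toFun v := v ∘ π
  map_add' _ _ := rfl
  map_smul' _ _ := rfl

/-!
Sort the coordinates by their type `t = (v₁ k, v₂ k, v₃ k, v₄ k) ∈ F₂⁴` and let `a t` count the
coordinates of type `t`: then `m = ∑ a t`, `a 0 = 0` by the covering assumption, and every
hypothesis is a congruence on the fifteen numbers `a t`, `t ≠ 0`. Mod 2 (Möbius inversion of
the intersection sizes) they force `a t ≡ a (1,1,1,1) + [t₄ = 0]`, so `a = ε + 2b` where `ε` is the
indicator of the 7 types with `t₄ = 0` or of the 8 types with `t₄ = 1`. The halves `b` are the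
type counts of four vectors `w₁, …, w₄` of weight `≡ 2 (mod 4)` whose pairwise intersections are
odd exactly for `{1, 4}` and `{2, 3}`. This pairing is nondegenerate, so each of the fifteen
nonzero combinations of the `w_i` is nonzero and has weight at least `2` (six of them) or at least
`4` (the nine of weight `≡ 0 (mod 4)`); every coordinate lies in exactly eight of them, so
`8 ∑ b ≥ 6 · 2 + 9 · 4`, i.e. `∑ b ≥ 6` and `m ≥ 7 + 2 · 6 = 19`. For `m = 19` all these bounds
are equalities, which determines `a`; codes with the same type counts differ by a permutation of
the coordinates.
-/

open Finset

section TypeCount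

variable {m n : ℕ}

def typeCount (v : Fin n → Fin m → ZMod 2) (t : Fin n → ZMod 2) : ℕ :=
  #{k | (fun i => v i k) = t}

theorem card_filter_eq_sum_typeCount (v : Fin n → Fin m → ZMod 2)
    (P : (Fin n → ZMod 2) → Prop) [DecidablePred P] :
    #{k | P fun i => v i k} = ∑ t with P t, typeCount v t := by
  rw [card_eq_sum_card_fiberwise (f := fun k i => v i k) (t := {t | P t})
    (fun k hk => by simpa using hk)]
  unfold typeCount
  refine sum_congr rfl fun t ht => congrArg card ?_
  ext k
  simp only [mem_filter, mem_univ, true_and, and_iff_right_iff_imp]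
  rintro rfl
  simpa using ht

theorem card_supp (v : Fin n → Fin m → ZMod 2) (i : Fin n) :
    #(supp (v i)) = ∑ t with t i ≠ 0, typeCount v t :=
  card_filter_eq_sum_typeCount v fun t => t i ≠ 0

theorem card_supp_inter (v : Fin n → Fin m → ZMod 2) (i j : Fin n) :
    #(supp (v i) ∩ supp (v j)) = ∑ t with t i ≠ 0 ∧ t j ≠ 0, typeCount v t := by
  rw [supp, supp, ← filter_and]
  exact card_filter_eq_sum_typeCount v fun t => t i ≠ 0 ∧ t j ≠ 0

theorem card_supp_inter_inter (v : Fin n → Fin m → ZMod 2) (i j l : Fin n) :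
    #(supp (v i) ∩ supp (v j) ∩ supp (v l)) =
      ∑ t with t i ≠ 0 ∧ t j ≠ 0 ∧ t l ≠ 0, typeCount v t := by
  rw [supp, supp, supp, ← filter_and, ← filter_and]
  simp_rw [and_assoc]
  exact card_filter_eq_sum_typeCount v fun t => t i ≠ 0 ∧ t j ≠ 0 ∧ t l ≠ 0

theorem sum_typeCount (v : Fin n → Fin m → ZMod 2) : ∑ t, typeCount v t = m := by
  simpa [typeCount] using (card_eq_sum_card_fiberwise (f := fun k i => v i k) (s := univ)
    (t := univ) (fun _ _ => mem_univ _)).symm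

theorem typeCount_zero_eq_zero (v : Fin n → Fin m → ZMod 2) (hcov : ∀ k, ∃ i, v i k ≠ 0) :
    typeCount v 0 = 0 := by
  rw [typeCount, card_eq_zero, filter_eq_empty_iff]
  intro k _ hk
  obtain ⟨i, hi⟩ := hcov k
  exact hi (congrFun hk i)

theorem exists_perm_comp_eq_of_card_fiber_eq {ι α : Type*} [Fintype ι] [DecidableEq α]
    (f g : ι → α) (h : ∀ t, #{i | f i = t} = #{i | g i = t}) :
    ∃ π : Equiv.Perm ι, ∀ i, f (π i) = g i := by
  have hc : ∀ t, Fintype.card {i // g i = t} = Fintype.card {i // f i = t} := fun t => by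
    rw [Fintype.card_subtype, Fintype.card_subtype, h]
  refine ⟨((Equiv.sigmaFiberEquiv g).symm.trans
    (Equiv.sigmaCongrRight fun t => Fintype.equivOfCardEq (hc t))).trans
    (Equiv.sigmaFiberEquiv f), fun i => ?_⟩
  exact (Fintype.equivOfCardEq (hc (g i)) ⟨i, rfl⟩).2

theorem exists_perm_of_typeCount_eq (v w : Fin n → Fin m → ZMod 2)
    (h : typeCount v = typeCount w) : ∃ π : Equiv.Perm (Fin m), ∀ i, permMap π (v i) = w i := by
  obtain ⟨π, hπ⟩ := exists_perm_comp_eq_of_card_fiber_eq _ _ (congrFun h)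
  exact ⟨π, fun i => funext fun k => congrFun (hπ k) i⟩

end TypeCount

theorem exists_apply_ne_zero_of_mem_span {ι R : Type*} [Semiring R] {S : Set (ι → R)}
    {x : ι → R} (hx : x ∈ Submodule.span R S) {k : ι} (hk : x k ≠ 0) : ∃ u ∈ S, u k ≠ 0 := by
  by_contra! h
  exact hk (Submodule.span_le (p := LinearMap.ker (LinearMap.proj k)) |>.mpr h hx)

theorem ZMod.sum_univ_two {M : Type*} [AddCommMonoid M] (f : ZMod 2 → M) :
    ∑ x, f x = f 0 + f 1 :=
  Fin.sum_univ_two f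

theorem Fin.sum_univ_succ_pi {α M : Type*} [Fintype α] [AddCommMonoid M] {n : ℕ}
    (f : (Fin (n + 1) → α) → M) : ∑ t, f t = ∑ x, ∑ t : Fin n → α, f (Fin.cons x t) := by
  rw [← (Fin.consEquiv fun _ => α).sum_comp, Fintype.sum_prod_type]
  rfl

theorem sum_fin_four_zmod_two {M : Type*} [AddCommMonoid M] (f : (Fin 4 → ZMod 2) → M) :
    ∑ t, f t = f ![0, 0, 0, 0] + f ![0, 0, 0, 1] + f ![0, 0, 1, 0] + f ![0, 0, 1, 1] +
      f ![0, 1, 0, 0] + f ![0, 1, 0, 1] + f ![0, 1, 1, 0] + f ![0, 1, 1, 1] +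
      f ![1, 0, 0, 0] + f ![1, 0, 0, 1] + f ![1, 0, 1, 0] + f ![1, 0, 1, 1] +
      f ![1, 1, 0, 0] + f ![1, 1, 0, 1] + f ![1, 1, 1, 0] + f ![1, 1, 1, 1] := by
  simp only [Fin.sum_univ_succ_pi, ZMod.sum_univ_two, Fintype.sum_unique, add_assoc]
  rfl

theorem range_vecCons_four {α : Type*} (a b c d : α) :
    Set.range ![a, b, c, d] = {a, b, c, d} := by
  simp only [Matrix.range_cons, Matrix.range_empty, Set.union_empty, Set.singleton_union]

theorem two_le_of_mod_four_eq_two {n : ℕ} (h : n % 4 = 2) : 2 ≤ n := by omega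

theorem four_le_of_mod_four_eq_zero {n : ℕ} (h : n % 4 = 0) (h0 : n ≠ 0) : 4 ≤ n := by omega

/- In the next two lemmas `a1001` stands for the number of coordinates of type `(1, 0, 0, 1)`,
and `b1001` for half of such a count. -/
set_option maxHeartbeats 1000000 in
theorem six_le_halved_total
    (b0001 b0010 b0011 b0100 b0101 b0110 b0111 b1000
      b1001 b1010 b1011 b1100 b1101 b1110 b1111 : ℕ)
    (c1 : (b1000 + b1001 + b1010 + b1011 + b1100 + b1101 + b1110 + b1111) % 4 = 2)
    (c2 : (b0100 + b0101 + b0110 + b0111 + b1100 + b1101 + b1110 + b1111) % 4 = 2)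
    (c3 : (b0010 + b0011 + b0110 + b0111 + b1010 + b1011 + b1110 + b1111) % 4 = 2)
    (c4 : (b0001 + b0011 + b0101 + b0111 + b1001 + b1011 + b1101 + b1111) % 4 = 2)
    (c12 : (b1100 + b1101 + b1110 + b1111) % 2 = 0)
    (c13 : (b1010 + b1011 + b1110 + b1111) % 2 = 0)
    (c14 : (b1001 + b1011 + b1101 + b1111) % 2 = 1)
    (c23 : (b0110 + b0111 + b1110 + b1111) % 2 = 1)
    (c24 : (b0101 + b0111 + b1101 + b1111) % 2 = 0)
    (c34 : (b0011 + b0111 + b1011 + b1111) % 2 = 0) :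
    6 ≤ b0001 + b0010 + b0011 + b0100 + b0101 + b0110 + b0111 + b1000 + b1001 + b1010 + b1011 +
      b1100 + b1101 + b1110 + b1111 ∧
      (b0001 + b0010 + b0011 + b0100 + b0101 + b0110 + b0111 + b1000 + b1001 + b1010 + b1011 +
       b1100 + b1101 + b1110 + b1111 = 6 →
        b0001 = 1 ∧ b0010 = 1 ∧ b0011 = 0 ∧ b0100 = 1 ∧ b0101 = 0 ∧ b0110 = 1 ∧ b0111 = 0 ∧
        b1000 = 1 ∧ b1001 = 1 ∧ b1010 = 0 ∧ b1011 = 0 ∧ b1100 = 0 ∧ b1101 = 0 ∧ b1110 = 0 ∧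
        b1111 = 0) := by
  -- weights of the fifteen nonzero combinations `∑ c_i w_i`, named by `c`; those `≡ 0 (mod 4)`
  -- are nonzero because they meet some `w_j` in an odd number of coordinates
  have w0001 : 2 ≤ b0001 + b0011 + b0101 + b0111 + b1001 + b1011 + b1101 + b1111 :=
    two_le_of_mod_four_eq_two c4
  have w0010 : 2 ≤ b0010 + b0011 + b0110 + b0111 + b1010 + b1011 + b1110 + b1111 :=
    two_le_of_mod_four_eq_two c3
  have w0011 : 4 ≤ b0001 + b0010 + b0101 + b0110 + b1001 + b1010 + b1101 + b1110 :=
    four_le_of_mod_four_eq_zero (by omega) (by omega)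
  have w0100 : 2 ≤ b0100 + b0101 + b0110 + b0111 + b1100 + b1101 + b1110 + b1111 :=
    two_le_of_mod_four_eq_two c2
  have w0101 : 4 ≤ b0001 + b0011 + b0100 + b0110 + b1001 + b1011 + b1100 + b1110 :=
    four_le_of_mod_four_eq_zero (by omega) (by omega)
  have w0110 : 2 ≤ b0010 + b0011 + b0100 + b0101 + b1010 + b1011 + b1100 + b1101 :=
    two_le_of_mod_four_eq_two (by omega)
  have w0111 : 4 ≤ b0001 + b0010 + b0100 + b0111 + b1001 + b1010 + b1100 + b1111 :=
    four_le_of_mod_four_eq_zero (by omega) (by omega)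
  have w1000 : 2 ≤ b1000 + b1001 + b1010 + b1011 + b1100 + b1101 + b1110 + b1111 :=
    two_le_of_mod_four_eq_two c1
  have w1001 : 2 ≤ b0001 + b0011 + b0101 + b0111 + b1000 + b1010 + b1100 + b1110 :=
    two_le_of_mod_four_eq_two (by omega)
  have w1010 : 4 ≤ b0010 + b0011 + b0110 + b0111 + b1000 + b1001 + b1100 + b1101 :=
    four_le_of_mod_four_eq_zero (by omega) (by omega)
  have w1011 : 4 ≤ b0001 + b0010 + b0101 + b0110 + b1000 + b1011 + b1100 + b1111 :=
    four_le_of_mod_four_eq_zero (by omega) (by omega)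
  have w1100 : 4 ≤ b0100 + b0101 + b0110 + b0111 + b1000 + b1001 + b1010 + b1011 :=
    four_le_of_mod_four_eq_zero (by omega) (by omega)
  have w1101 : 4 ≤ b0001 + b0011 + b0100 + b0110 + b1000 + b1010 + b1101 + b1111 :=
    four_le_of_mod_four_eq_zero (by omega) (by omega)
  have w1110 : 4 ≤ b0010 + b0011 + b0100 + b0101 + b1000 + b1001 + b1110 + b1111 :=
    four_le_of_mod_four_eq_zero (by omega) (by omega)
  have w1111 : 4 ≤ b0001 + b0010 + b0100 + b0111 + b1000 + b1011 + b1101 + b1110 :=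
    four_le_of_mod_four_eq_zero (by omega) (by omega)
  -- every coordinate lies in eight of the fifteen supports: `∑ c, w c = 8 ∑ b`
  refine ⟨by linarith, fun hT => ?_⟩
  clear c1 c2 c3 c4 c12 c13 c14 c23 c24 c34
  refine ⟨?_, ?_, ?_, ?_, ?_, ?_, ?_, ?_, ?_, ?_, ?_, ?_, ?_, ?_, ?_⟩ <;> linarith

set_option maxHeartbeats 1000000 in
theorem nineteen_le_total
    {a0001 a0010 a0011 a0100 a0101 a0110 a0111 a1000
      a1001 a1010 a1011 a1100 a1101 a1110 a1111 : ℕ}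
    (h1 : (a1000 + a1001 + a1010 + a1011 + a1100 + a1101 + a1110 + a1111) % 8 = 0)
    (h2 : (a0100 + a0101 + a0110 + a0111 + a1100 + a1101 + a1110 + a1111) % 8 = 0)
    (h3 : (a0010 + a0011 + a0110 + a0111 + a1010 + a1011 + a1110 + a1111) % 8 = 0)
    (h4 : (a0001 + a0011 + a0101 + a0111 + a1001 + a1011 + a1101 + a1111) % 8 = 4)
    (h12 : (a1100 + a1101 + a1110 + a1111) % 4 = 2)
    (h13 : (a1010 + a1011 + a1110 + a1111) % 4 = 2)
    (h14 : (a1001 + a1011 + a1101 + a1111) % 4 = 2)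
    (h23 : (a0110 + a0111 + a1110 + a1111) % 4 = 0)
    (h24 : (a0101 + a0111 + a1101 + a1111) % 4 = 0)
    (h34 : (a0011 + a0111 + a1011 + a1111) % 4 = 0)
    (h123 : Odd (a1110 + a1111))
    (h124 : Even (a1101 + a1111))
    (h134 : Even (a1011 + a1111))
    (h234 : Even (a0111 + a1111)) :
    19 ≤ a0001 + a0010 + a0011 + a0100 + a0101 + a0110 + a0111 + a1000 + a1001 + a1010 + a1011 +
      a1100 + a1101 + a1110 + a1111 ∧
      (a0001 + a0010 + a0011 + a0100 + a0101 + a0110 + a0111 + a1000 + a1001 + a1010 + a1011 +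
       a1100 + a1101 + a1110 + a1111 = 19 →
        a0001 = 2 ∧ a0010 = 3 ∧ a0011 = 0 ∧ a0100 = 3 ∧ a0101 = 0 ∧ a0110 = 3 ∧ a0111 = 0 ∧
        a1000 = 3 ∧ a1001 = 2 ∧ a1010 = 1 ∧ a1011 = 0 ∧ a1100 = 1 ∧ a1101 = 0 ∧ a1110 = 1 ∧
        a1111 = 0) := by
  rw [Nat.odd_iff] at h123
  rw [Nat.even_iff] at h124 h134 h234
  rcases Nat.even_or_odd a1111 with ⟨b1111, rfl⟩ | ⟨b1111, rfl⟩
  · obtain ⟨⟨b0001, rfl⟩, ⟨b0010, rfl⟩, ⟨b0011, rfl⟩, ⟨b0100, rfl⟩, ⟨b0101, rfl⟩, ⟨b0110, rfl⟩,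
        ⟨b0111, rfl⟩, ⟨b1000, rfl⟩, ⟨b1001, rfl⟩, ⟨b1010, rfl⟩, ⟨b1011, rfl⟩, ⟨b1100, rfl⟩,
        ⟨b1101, rfl⟩, ⟨b1110, rfl⟩⟩ :
        Even a0001 ∧ Odd a0010 ∧ Even a0011 ∧ Odd a0100 ∧ Even a0101 ∧ Odd a0110 ∧
          Even a0111 ∧ Odd a1000 ∧ Even a1001 ∧ Odd a1010 ∧ Even a1011 ∧ Odd a1100 ∧
          Even a1101 ∧ Odd a1110 := by
      simp only [Nat.even_iff, Nat.odd_iff]; omega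
    clear h123 h124 h134 h234
    have := six_le_halved_total b0001 b0010 b0011 b0100 b0101 b0110 b0111 b1000 b1001 b1010
      b1011 b1100 b1101 b1110 b1111 (by omega) (by omega) (by omega) (by omega) (by omega)
      (by omega) (by omega) (by omega) (by omega) (by omega)
    clear h1 h2 h3 h4 h12 h13 h14 h23 h24 h34
    omega
  · obtain ⟨⟨b0001, rfl⟩, ⟨b0010, rfl⟩, ⟨b0011, rfl⟩, ⟨b0100, rfl⟩, ⟨b0101, rfl⟩, ⟨b0110, rfl⟩,
        ⟨b0111, rfl⟩, ⟨b1000, rfl⟩, ⟨b1001, rfl⟩, ⟨b1010, rfl⟩, ⟨b1011, rfl⟩, ⟨b1100, rfl⟩,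
        ⟨b1101, rfl⟩, ⟨b1110, rfl⟩⟩ :
        Odd a0001 ∧ Even a0010 ∧ Odd a0011 ∧ Even a0100 ∧ Odd a0101 ∧ Even a0110 ∧
          Odd a0111 ∧ Even a1000 ∧ Odd a1001 ∧ Even a1010 ∧ Odd a1011 ∧ Even a1100 ∧
          Odd a1101 ∧ Even a1110 := by
      simp only [Nat.even_iff, Nat.odd_iff]; omega
    clear h123 h124 h134 h234
    have := six_le_halved_total b0001 b0010 b0011 b0100 b0101 b0110 b0111 b1000 b1001 b1010
      b1011 b1100 b1101 b1110 b1111 (by omega) (by omega) (by omega) (by omega) (by omega)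
      (by omega) (by omega) (by omega) (by omega) (by omega)
    clear h1 h2 h3 h4 h12 h13 h14 h23 h24 h34
    omega

def basicRep : Fin 4 → Fin 19 → ZMod 2 :=
  ![indVec {1, 2, 3, 4, 5, 6, 7, 8}, indVec {1, 2, 9, 10, 11, 12, 13, 14},
    indVec {1, 3, 9, 10, 11, 15, 16, 17}, indVec {4, 5, 18, 19}]

theorem nineteen_le_and_typeCount_eq {m : ℕ} (v : Fin 4 → Fin m → ZMod 2)
    (h0 : typeCount v 0 = 0)
    (h1 : #(supp (v 0)) % 8 = 0) (h2 : #(supp (v 1)) % 8 = 0)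
    (h3 : #(supp (v 2)) % 8 = 0) (h4 : #(supp (v 3)) % 8 = 4)
    (h12 : #(supp (v 0) ∩ supp (v 1)) % 4 = 2) (h13 : #(supp (v 0) ∩ supp (v 2)) % 4 = 2)
    (h14 : #(supp (v 0) ∩ supp (v 3)) % 4 = 2) (h23 : #(supp (v 1) ∩ supp (v 2)) % 4 = 0)
    (h24 : #(supp (v 1) ∩ supp (v 3)) % 4 = 0) (h34 : #(supp (v 2) ∩ supp (v 3)) % 4 = 0)
    (h123 : Odd #(supp (v 0) ∩ supp (v 1) ∩ supp (v 2)))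
    (h124 : Even #(supp (v 0) ∩ supp (v 1) ∩ supp (v 3)))
    (h134 : Even #(supp (v 0) ∩ supp (v 2) ∩ supp (v 3)))
    (h234 : Even #(supp (v 1) ∩ supp (v 2) ∩ supp (v 3))) :
    19 ≤ m ∧ (m = 19 → typeCount v = typeCount basicRep) := by
  have hm := sum_typeCount v
  simp only [card_supp, card_supp_inter, card_supp_inter_inter, sum_filter, sum_fin_four_zmod_two,
    Matrix.cons_val_zero, Matrix.cons_val_one, Matrix.cons_val, Fin.isValue, ne_eq,
    not_true_eq_false, one_ne_zero, not_false_eq_true, ↓reduceIte, and_self, and_true, and_false,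
    add_zero, zero_add] at h1 h2 h3 h4 h12 h13 h14 h23 h24 h34 h123 h124 h134 h234
  have h0' : typeCount v ![0, 0, 0, 0] = 0 := by
    rw [show ![(0 : ZMod 2), 0, 0, 0] = 0 by decide]
    exact h0
  rw [sum_fin_four_zmod_two, h0', zero_add] at hm
  obtain ⟨hle, hvals⟩ := nineteen_le_total h1 h2 h3 h4 h12 h13 h14 h23 h24 h34 h123 h124 h134 h234
  refine ⟨hm ▸ hle, fun h19 => ?_⟩
  obtain ⟨e0001, e0010, e0011, e0100, e0101, e0110, e0111, e1000, e1001, e1010, e1011, e1100,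
    e1101, e1110, e1111⟩ := hvals (hm.trans h19)
  have hbit : ∀ x : ZMod 2, x = 0 ∨ x = 1 := by decide
  funext t
  obtain ⟨x, y, z, w, rfl⟩ : ∃ x y z w, t = ![x, y, z, w] :=
    ⟨t 0, t 1, t 2, t 3, by ext i; fin_cases i <;> rfl⟩
  rcases hbit x with rfl | rfl <;> rcases hbit y with rfl | rfl <;> rcases hbit z with rfl | rfl <;>
    rcases hbit w with rfl | rfl <;>
    simp only [h0', e0001, e0010, e0011, e0100, e0101, e0110, e0111, e1000, e1001, e1010, e1011,
      e1100, e1101, e1110, e1111] <;>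
    decide

theorem stmt19_general (m : ℕ) (v₁ v₂ v₃ v₄ : Fin m → ZMod 2)
    (h1 : (supp v₁).card % 8 = 0) (h2 : (supp v₂).card % 8 = 0)
    (h3 : (supp v₃).card % 8 = 0) (h4 : (supp v₄).card % 8 = 4)
    (h12 : (supp v₁ ∩ supp v₂).card % 4 = 2)
    (h13 : (supp v₁ ∩ supp v₃).card % 4 = 2)
    (h14 : (supp v₁ ∩ supp v₄).card % 4 = 2)
    (h23 : (supp v₂ ∩ supp v₃).card % 4 = 0)
    (h24 : (supp v₂ ∩ supp v₄).card % 4 = 0)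
    (h34 : (supp v₃ ∩ supp v₄).card % 4 = 0)
    (h123 : Odd (supp v₁ ∩ supp v₂ ∩ supp v₃).card)
    (h124 : Even (supp v₁ ∩ supp v₂ ∩ supp v₄).card)
    (h134 : Even (supp v₁ ∩ supp v₃ ∩ supp v₄).card)
    (h234 : Even (supp v₂ ∩ supp v₃ ∩ supp v₄).card)
    (hcov : ∀ k : Fin m, ∃ v ∈ Submodule.span (ZMod 2)
      ({v₁, v₂, v₃, v₄} : Set (Fin m → ZMod 2)), v k ≠ 0) :
    19 ≤ m ∧ (m = 19 → ∃ π : Equiv.Perm (Fin m),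
      Submodule.map (permMap π)
          (Submodule.span (ZMod 2) ({v₁, v₂, v₃, v₄} : Set (Fin m → ZMod 2))) =
        Submodule.span (ZMod 2) ({indVec {1, 2, 3, 4, 5, 6, 7, 8}, indVec {1, 2, 9, 10, 11, 12, 13, 14},
          indVec {1, 3, 9, 10, 11, 15, 16, 17}, indVec {4, 5, 18, 19}} : Set (Fin m → ZMod 2))) := by
  set v : Fin 4 → Fin m → ZMod 2 := ![v₁, v₂, v₃, v₄]
  have hv : ({v₁, v₂, v₃, v₄} : Set (Fin m → ZMod 2)) = Set.range v := (range_vecCons_four ..).symm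
  have h0 : typeCount v 0 = 0 := by
    refine typeCount_zero_eq_zero v fun k => ?_
    obtain ⟨x, hx, hxk⟩ := hcov k
    obtain ⟨_, ⟨i, rfl⟩, hik⟩ := exists_apply_ne_zero_of_mem_span (hv ▸ hx) hxk
    exact ⟨i, hik⟩
  obtain ⟨hle, heq⟩ := nineteen_le_and_typeCount_eq v h0 h1 h2 h3 h4 h12 h13 h14 h23 h24 h34
    h123 h124 h134 h234
  refine ⟨hle, fun hm => ?_⟩
  subst hm
  obtain ⟨π, hπ⟩ := exists_perm_of_typeCount_eq v basicRep (heq rfl)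
  refine ⟨π, ?_⟩
  rw [hv, ← range_vecCons_four, Submodule.map_span, ← Set.range_comp]
  exact congrArg _ (congrArg Set.range (funext hπ))

/-- Theorem 4.6, case of `C₁₀⁴` (characteristic vector `(0001111000)`): a doubly even
code realizing `C₁₀⁴` has degree at least 19, and in degree 19 it is, up to a
permutation of coordinates, the basic representation given in the paper. -/
theorem stmt19 (m : ℕ) (v₁ v₂ v₃ v₄ : Fin m → ZMod 2)
    (hli : LinearIndependent (ZMod 2) ![v₁, v₂, v₃, v₄])
    (hde4 : ∀ v ∈ Submodule.span (ZMod 2) ({v₁, v₂, v₃, v₄} : Set (Fin m → ZMod 2)),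
      (supp v).card % 4 = 0)
    (hde2 : ∀ u ∈ Submodule.span (ZMod 2) ({v₁, v₂, v₃, v₄} : Set (Fin m → ZMod 2)),
      ∀ v ∈ Submodule.span (ZMod 2) ({v₁, v₂, v₃, v₄} : Set (Fin m → ZMod 2)),
      (supp u ∩ supp v).card % 2 = 0)
    (h1 : (supp v₁).card % 8 = 0) (h2 : (supp v₂).card % 8 = 0)
    (h3 : (supp v₃).card % 8 = 0) (h4 : (supp v₄).card % 8 = 4)
    (h12 : (supp v₁ ∩ supp v₂).card % 4 = 2)
    (h13 : (supp v₁ ∩ supp v₃).card % 4 = 2)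
    (h14 : (supp v₁ ∩ supp v₄).card % 4 = 2)
    (h23 : (supp v₂ ∩ supp v₃).card % 4 = 0)
    (h24 : (supp v₂ ∩ supp v₄).card % 4 = 0)
    (h34 : (supp v₃ ∩ supp v₄).card % 4 = 0)
    (h123 : Odd (supp v₁ ∩ supp v₂ ∩ supp v₃).card)
    (h124 : Even (supp v₁ ∩ supp v₂ ∩ supp v₄).card)
    (h134 : Even (supp v₁ ∩ supp v₃ ∩ supp v₄).card)
    (h234 : Even (supp v₂ ∩ supp v₃ ∩ supp v₄).card)
    (hcov : ∀ k : Fin m, ∃ v ∈ Submodule.span (ZMod 2)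
      ({v₁, v₂, v₃, v₄} : Set (Fin m → ZMod 2)), v k ≠ 0) :
    19 ≤ m ∧ (m = 19 → ∃ π : Equiv.Perm (Fin m),
      Submodule.map (permMap π)
          (Submodule.span (ZMod 2) ({v₁, v₂, v₃, v₄} : Set (Fin m → ZMod 2))) =
        Submodule.span (ZMod 2) ({indVec {1, 2, 3, 4, 5, 6, 7, 8}, indVec {1, 2, 9, 10, 11, 12, 13, 14},
          indVec {1, 3, 9, 10, 11, 15, 16, 17}, indVec {4, 5, 18, 19}} : Set (Fin m → ZMod 2))) :=
  stmt19_general m v₁ v₂ v₃ v₄ h1 h2 h3 h4 h12 h13 h14 h23 h24 h34 h123 h124 h134 h234 hcov
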